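/- Let V be a nonempty finite vocabulary, (K, μ) a probability space of keys, and F an unbiased reweighting map. Let k_1, …, k_n be random keys on a common probability space such that for each i, k_i has marginal law μ and k_i is independent of the vector (k_1, …, k_{i-1}) (no further assumptions on the joint law, in particular the keys need not be i.i.d.). Then the n-fold ensemble remains unbiased: for every probability distribution P on V and every v ∈ V, E[ ENS_n(P, k_{1:n})(v) ] = P(v). -/

import Mathlib

/-!
The state reached after the first `n - 1` keys is a probability distribution and a measurable
function of those keys, hence independent of the last key, whose law is `μ`. Integrating the
last key out with the state frozen gives back the state by unbiasedness of `F`, so each step of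
the ensemble preserves the expectation.
-/

open MeasureTheory ProbabilityTheory

/-- A probability distribution on a finite type `V`: nonnegative and sums to one. -/
def IsProbDist {V : Type*} [Fintype V] (P : V → ℝ) : Prop :=
  (∀ v, 0 ≤ P v) ∧ ∑ v, P v = 1

/-- The `n`-fold ensemble of a reweighting map `F`:
`ENS F 1 P k = F P k₁` and `ENS F n P k = F (ENS F (n-1) P k_{1:n-1}) kₙ`. -/
def ENS {V K : Type*} (F : (V → ℝ) → K → (V → ℝ)) :
    (n : ℕ) → (V → ℝ) → (Fin n → K) → (V → ℝ)
  | 0, P, _ => P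
  | n + 1, P, k => F (ENS F n P (fun i : Fin n => k i.castSucc)) (k (Fin.last n))

namespace IsProbDist

variable {V : Type*} [Fintype V] {P : V → ℝ}

lemma apply_le_one (hP : IsProbDist P) (v : V) : P v ≤ 1 :=
  hP.2 ▸ Finset.single_le_sum (fun w _ => hP.1 w) (Finset.mem_univ v)

lemma abs_apply_le_one (hP : IsProbDist P) (v : V) : |P v| ≤ 1 :=
  abs_le.2 ⟨by linarith [hP.1 v], hP.apply_le_one v⟩

end IsProbDist

lemma ProbabilityTheory.IndepFun.integral_comp_prodMk {Ω α β E : Type*} [MeasurableSpace Ω]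
    [MeasurableSpace α] [MeasurableSpace β] [NormedAddCommGroup E] [NormedSpace ℝ E]
    [CompleteSpace E] {Pr : Measure Ω} [IsFiniteMeasure Pr] {X : Ω → α} {Y : Ω → β}
    (hX : AEMeasurable X Pr) (hY : AEMeasurable Y Pr) (hXY : IndepFun X Y Pr)
    {φ : α × β → E} (hφ : StronglyMeasurable φ)
    (hint : Integrable (fun ω => φ (X ω, Y ω)) Pr) :
    ∫ ω, φ (X ω, Y ω) ∂Pr = ∫ ω, ∫ y, φ (X ω, y) ∂(Pr.map Y) ∂Pr := by
  have hjoint : Pr.map (fun ω => (X ω, Y ω)) = (Pr.map X).prod (Pr.map Y) :=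
    hXY.map_prod_eq_prod_map_map hX hY
  have hφint : Integrable φ ((Pr.map X).prod (Pr.map Y)) := by
    rwa [← hjoint, integrable_map_measure hφ.aestronglyMeasurable (hX.prodMk hY)]
  calc ∫ ω, φ (X ω, Y ω) ∂Pr
      = ∫ z, φ z ∂((Pr.map X).prod (Pr.map Y)) := by
        rw [← hjoint, integral_map (hX.prodMk hY) hφ.aestronglyMeasurable]
    _ = ∫ x, ∫ y, φ (x, y) ∂(Pr.map Y) ∂(Pr.map X) := integral_prod φ hφint
    _ = ∫ ω, ∫ y, φ (X ω, y) ∂(Pr.map Y) ∂Pr :=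
        integral_map hX hφ.integral_prod_right'.aestronglyMeasurable

section Ensemble

variable {V K : Type*} {F : (V → ℝ) → K → (V → ℝ)}

lemma isProbDist_ENS [Fintype V]
    (hFdist : ∀ P : V → ℝ, IsProbDist P → ∀ k : K, IsProbDist (F P k))
    {P : V → ℝ} (hP : IsProbDist P) :
    ∀ (n : ℕ) (κ : Fin n → K), IsProbDist (ENS F n P κ)
  | 0, _ => hP
  | n + 1, κ => hFdist _ (isProbDist_ENS hFdist hP n _) (κ (Fin.last n))

lemma measurable_ENS [MeasurableSpace K]
    (hFmeas : ∀ v : V, Measurable (fun pk : (V → ℝ) × K => F pk.1 pk.2 v)) (P : V → ℝ) :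
    ∀ n : ℕ, Measurable (ENS F n P)
  | 0 => measurable_const
  | n + 1 => measurable_pi_lambda _ fun v => (hFmeas v).comp
      (((measurable_ENS hFmeas P n).comp
        (measurable_pi_lambda _ fun _ => measurable_pi_apply _)).prodMk (measurable_pi_apply _))

end Ensemble

theorem ensemble_unbiased_of_sequentially_independent_keys_general
    {V K Ω : Type*} [Fintype V] [MeasurableSpace K] [MeasurableSpace Ω]
    (μ : Measure K)
    (Pr : Measure Ω) [IsProbabilityMeasure Pr]
    (F : (V → ℝ) → K → (V → ℝ))
    (hFmeas : ∀ v : V, Measurable (fun pk : (V → ℝ) × K => F pk.1 pk.2 v))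
    (hFdist : ∀ P : V → ℝ, IsProbDist P → ∀ k : K, IsProbDist (F P k))
    (hFunbiased : ∀ P : V → ℝ, IsProbDist P → ∀ v : V, ∫ k, F P k v ∂μ = P v)
    (n : ℕ)
    (k : Fin n → Ω → K) (hkmeas : ∀ i, Measurable (k i))
    (hklaw : ∀ i, Measure.map (k i) Pr = μ)
    (hkindep : ∀ i : Fin n,
      IndepFun (fun ω => fun j : Fin i.1 => k ⟨j.1, j.2.trans i.2⟩ ω) (k i) Pr)
    (P : V → ℝ) (hP : IsProbDist P) (v : V) :
    ∫ ω, ENS F n P (fun i => k i ω) v ∂Pr = P v := by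
  induction n generalizing v with
  | zero => simp [ENS]
  | succ n ih =>
    set X : Ω → V → ℝ := fun ω => ENS F n P (fun i => k i.castSucc ω)
    have hXmeas : Measurable X :=
      (measurable_ENS hFmeas P n).comp (measurable_pi_lambda _ fun i => hkmeas i.castSucc)
    have hXY : IndepFun X (k (Fin.last n)) Pr :=
      (hkindep (Fin.last n)).comp (measurable_ENS hFmeas P n) measurable_id
    have hint : Integrable (fun ω => ENS F (n + 1) P (fun i => k i ω) v) Pr :=
      Integrable.of_bound ((measurable_pi_apply v).comp ((measurable_ENS hFmeas P _).comp
        (measurable_pi_lambda _ hkmeas))).aestronglyMeasurable 1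
        (.of_forall fun ω => (isProbDist_ENS hFdist hP _ _).abs_apply_le_one v)
    calc ∫ ω, ENS F (n + 1) P (fun i => k i ω) v ∂Pr
        = ∫ ω, ∫ y, F (X ω) y v ∂μ ∂Pr := by
          rw [← hklaw (Fin.last n)]
          exact hXY.integral_comp_prodMk hXmeas.aemeasurable (hkmeas _).aemeasurable
            (hFmeas v).stronglyMeasurable hint
      _ = ∫ ω, X ω v ∂Pr := by
          congr 1 with ω
          exact hFunbiased _ (isProbDist_ENS hFdist hP _ _) v
      _ = P v := ih (fun i => k i.castSucc) (fun _ => hkmeas _) (fun _ => hklaw _)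
          (fun i => hkindep i.castSucc) v

/-- **Unbiasedness of the ensemble under sequentially independent keys.**  If `F` is an
unbiased reweighting map and `k 0, …, k (n-1)` are random keys such that each `k i` has
marginal law `μ` and is independent of the vector of previous keys `(k 0, …, k (i-1))`
(the keys need not be i.i.d.), then the `n`-fold ensemble remains unbiased: for every
probability distribution `P` on `V` and every token `v`,
`E[ENS F n P (k · ω) v] = P v`. -/
theorem ensemble_unbiased_of_sequentially_independent_keys
    {V K Ω : Type*} [Fintype V] [Nonempty V] [MeasurableSpace K] [MeasurableSpace Ω]
    (μ : Measure K) [IsProbabilityMeasure μ]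
    (Pr : Measure Ω) [IsProbabilityMeasure Pr]
    (F : (V → ℝ) → K → (V → ℝ))
    (hFmeas : ∀ v : V, Measurable (fun pk : (V → ℝ) × K => F pk.1 pk.2 v))
    (hFdist : ∀ P : V → ℝ, IsProbDist P → ∀ k : K, IsProbDist (F P k))
    (hFunbiased : ∀ P : V → ℝ, IsProbDist P → ∀ v : V, ∫ k, F P k v ∂μ = P v)
    (n : ℕ) (hn : 1 ≤ n)
    (k : Fin n → Ω → K) (hkmeas : ∀ i, Measurable (k i))
    (hklaw : ∀ i, Measure.map (k i) Pr = μ)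
    (hkindep : ∀ i : Fin n,
      IndepFun (fun ω => fun j : Fin i.1 => k ⟨j.1, j.2.trans i.2⟩ ω) (k i) Pr)
    (P : V → ℝ) (hP : IsProbDist P) (v : V) :
    ∫ ω, ENS F n P (fun i => k i ω) v ∂Pr = P v :=
  ensemble_unbiased_of_sequentially_independent_keys_general μ Pr F hFmeas hFdist hFunbiased n k
    hkmeas hklaw hkindep P hP v
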